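/- Let A ∈ SO(3) (a 3×3 real orthogonal matrix of determinant 1) and let g ∈ SO(8) be the block-diagonal matrix g = diag(1, A, I₄). Then for all skew-symmetric 8×8 real matrices X, Y, Z: Te(g X gᵀ, g Y gᵀ, g Z gᵀ) = Te(X, Y, Z). (That is, the left-invariant form Te(ω) on SO(8) is invariant under the adjoint action of the isotropy subgroup 1×SO(3)×I₄, so it descends to a form on the flag manifold F(1,4,ℝ⁸).) -/

import Mathlib

open Matrix

/- STATEMENT 14: The Chern–Simons transgression 3-form
`Te = (1/(2π²))(μ₁₂∧μ₁₃∧μ₁₄ + ∑_{k=5}^{8}(μ₁₂∧μ₃k∧μ₄k − μ₁₃∧μ₂k∧μ₄k + μ₁₄∧μ₂k∧μ₃k))`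
on skew-symmetric 8×8 matrices is invariant under the adjoint action
`X ↦ g X gᵀ` of `g = diag(1, A, I₄)` with `A ∈ SO(3)`. (0-indexed.) -/

/-- Wedge of three 1-forms evaluated on three vectors (the 3×3 determinant). -/
noncomputable def w3 (f g h : Matrix (Fin 8) (Fin 8) ℝ → ℝ) (x y z : Matrix (Fin 8) (Fin 8) ℝ) : ℝ :=
  f x * g y * h z - f x * g z * h y - f y * g x * h z
    + f y * g z * h x + f z * g x * h y - f z * g y * h x

/-- Coordinate functional `μ_{ij}(X) = X_{ij}`. -/
def mu (i j : Fin 8) : Matrix (Fin 8) (Fin 8) ℝ → ℝ := fun X => X i j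

/-- column embedding `{5,…,8}` (0-indexed: `k ↦ k + 4`). -/
def col (k : Fin 4) : Fin 8 := ⟨k.1 + 4, by have := k.isLt; omega⟩

/-- The transgression 3-form `Te(ω)`, at the base point, in Maurer–Cartan coordinates. -/
noncomputable def Te (x y z : Matrix (Fin 8) (Fin 8) ℝ) : ℝ :=
  (1 / (2 * Real.pi ^ 2)) *
    (w3 (mu 0 1) (mu 0 2) (mu 0 3) x y z +
      ∑ k : Fin 4,
        (w3 (mu 0 1) (mu 2 (col k)) (mu 3 (col k)) x y z
          - w3 (mu 0 2) (mu 1 (col k)) (mu 3 (col k)) x y z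
          + w3 (mu 0 3) (mu 1 (col k)) (mu 2 (col k)) x y z))

/-- The block-diagonal matrix `g = diag(1, A, I₄)`. -/
noncomputable def gmat (A : Matrix (Fin 3) (Fin 3) ℝ) : Matrix (Fin 8) (Fin 8) ℝ :=
  Matrix.of fun i j =>
    if i.1 = 0 ∧ j.1 = 0 then 1
    else if h : 1 ≤ i.1 ∧ i.1 ≤ 3 ∧ 1 ≤ j.1 ∧ j.1 ≤ 3 then
      A ⟨i.1 - 1, by omega⟩ ⟨j.1 - 1, by omega⟩
    else if 4 ≤ i.1 ∧ i = j then 1 else 0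

/-! Every summand of `Te X Y Z` is a `3 × 3` determinant whose rows are taken from the vectors
`(X₀ⱼ)_{j=1,2,3}` and `(Xⱼₖ)_{j=1,2,3}`, `k = 5, …, 8`, of `X`, `Y`, `Z`. Conjugation by
`g = diag(1, A, I₄)` replaces each of these vectors by its image under `A`, so every determinant
is multiplied by `det A = 1`. -/

def blockIdx (m : Fin 3) : Fin 8 := ⟨m + 1, by omega⟩

def topRow (X : Matrix (Fin 8) (Fin 8) ℝ) : Fin 3 → ℝ := fun m => X 0 (blockIdx m)

def blockCol (k : Fin 4) (X : Matrix (Fin 8) (Fin 8) ℝ) : Fin 3 → ℝ :=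
  fun m => X (blockIdx m) (col k)

theorem det_of_mulVec {n R : Type*} [Fintype n] [DecidableEq n] [CommRing R]
    (A : Matrix n n R) (v : n → n → R) :
    det (of fun i => A *ᵥ v i) = det A * det (of v) := by
  have : (of fun i => A *ᵥ v i) = of v * Aᵀ := by
    refine Matrix.ext fun i j => ?_
    simp only [of_apply, mulVec, dotProduct, mul_apply, transpose_apply, mul_comm]
  rw [this, det_mul, det_transpose, mul_comm]

theorem det_of_vecCons_mulVec {R : Type*} [CommRing R] (A : Matrix (Fin 3) (Fin 3) R)
    (p q r : Fin 3 → R) :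
    det (of ![A *ᵥ p, A *ᵥ q, A *ᵥ r]) = det A * det (of ![p, q, r]) := by
  convert det_of_mulVec A ![p, q, r] using 2
  ext i : 1
  fin_cases i <;> rfl

theorem Te_eq_sum_det (x y z : Matrix (Fin 8) (Fin 8) ℝ) :
    Te x y z = 1 / (2 * Real.pi ^ 2) *
      (det (of ![topRow x, topRow y, topRow z]) +
        ∑ k : Fin 4, (det (of ![topRow x, blockCol k y, blockCol k z])
          - det (of ![topRow y, blockCol k x, blockCol k z])
          + det (of ![topRow z, blockCol k x, blockCol k y]))) := by
  simp only [Te, w3, mu, topRow, blockCol, det_fin_three, of_apply, cons_val_zero, cons_val_one,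
    cons_val_two, head_cons, tail_cons, Fin.sum_univ_four, show blockIdx 0 = 1 from rfl,
    show blockIdx 1 = 2 from rfl, show blockIdx 2 = 3 from rfl]
  ring

section gmat

variable (A : Matrix (Fin 3) (Fin 3) ℝ)

theorem gmat_mul_apply_zero (M : Matrix (Fin 8) (Fin 8) ℝ) (j : Fin 8) :
    (gmat A * M) 0 j = M 0 j := by
  simp [mul_apply, gmat]

theorem gmat_mul_apply_col (M : Matrix (Fin 8) (Fin 8) ℝ) (k : Fin 4) (j : Fin 8) :
    (gmat A * M) (col k) j = M (col k) j := by
  fin_cases k <;> simp [mul_apply, gmat, _root_.col]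

theorem gmat_mul_apply_blockIdx (M : Matrix (Fin 8) (Fin 8) ℝ) (m : Fin 3) (j : Fin 8) :
    (gmat A * M) (blockIdx m) j = ∑ n, A m n * M (blockIdx n) j := by
  fin_cases m <;> simp [mul_apply, Fin.sum_univ_succ, gmat, blockIdx]

theorem mul_transpose_gmat (M : Matrix (Fin 8) (Fin 8) ℝ) :
    M * (gmat A)ᵀ = (gmat A * Mᵀ)ᵀ := by
  rw [transpose_mul, transpose_transpose]

theorem topRow_conj_gmat (X : Matrix (Fin 8) (Fin 8) ℝ) :
    topRow (gmat A * X * (gmat A)ᵀ) = A *ᵥ topRow X := by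
  funext m
  simp only [topRow, Matrix.mul_assoc, mul_transpose_gmat, gmat_mul_apply_zero, transpose_apply,
    gmat_mul_apply_blockIdx, mulVec, dotProduct]

theorem blockCol_conj_gmat (k : Fin 4) (X : Matrix (Fin 8) (Fin 8) ℝ) :
    blockCol k (gmat A * X * (gmat A)ᵀ) = A *ᵥ blockCol k X := by
  funext m
  simp only [blockCol, Matrix.mul_assoc, mul_transpose_gmat, gmat_mul_apply_blockIdx,
    transpose_apply, gmat_mul_apply_col, mulVec, dotProduct]

end gmat

theorem stmt_14_general (A : Matrix (Fin 3) (Fin 3) ℝ) (hdet : A.det = 1)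
    (X Y Z : Matrix (Fin 8) (Fin 8) ℝ) :
    Te (gmat A * X * (gmat A)ᵀ) (gmat A * Y * (gmat A)ᵀ) (gmat A * Z * (gmat A)ᵀ) =
      Te X Y Z := by
  simp only [Te_eq_sum_det, topRow_conj_gmat, blockCol_conj_gmat, det_of_vecCons_mulVec, hdet,
    one_mul]

theorem stmt_14 (A : Matrix (Fin 3) (Fin 3) ℝ) (hA : Aᵀ * A = 1) (hdet : A.det = 1)
    (X Y Z : Matrix (Fin 8) (Fin 8) ℝ) (hX : Xᵀ = -X) (hY : Yᵀ = -Y) (hZ : Zᵀ = -Z) :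
    Te (gmat A * X * (gmat A)ᵀ) (gmat A * Y * (gmat A)ᵀ) (gmat A * Z * (gmat A)ᵀ) =
      Te X Y Z :=
  stmt_14_general A hdet X Y Z
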